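/- arXiv:math/9703205 — 4 statements merged into one kernel-verified Lean document; each statement's English description precedes it below -/
import Mathlib

section
/- Let h : [1,∞) → ℝ satisfy h(ξ) = ξ + g(ξ) where g is differentiable with |g'(ξ)| ≤ C ξ^(-2/3) for all ξ ≥ 1. Then the improper integral ∫₁^∞ ξ^(-2/3) exp(i h(ξ)) dξ converges, and moreover ∫_N^∞ ξ^(-2/3) exp(i h(ξ)) dξ = O(N^(-1/3)) as N → ∞. -/
open MeasureTheory Filter Real Set intervalIntegral
open scoped Topology

/-!
Write `ξ ^ (-2/3) * exp (i h ξ) = f ξ * exp (i ξ)` with the amplitude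
`f ξ = ξ ^ (-2/3) * exp (i g ξ)` and integrate by parts against `exp (i ξ)`. The bound on `g'`
gives `‖f' ξ‖ ≤ (2/3) ξ ^ (-5/3) + C ξ ^ (-4/3)`, which is integrable at infinity, so the partial
integrals converge, and the tail beyond `N` is at most the boundary term `‖f N‖ = N ^ (-2/3)` plus
`∫_N^∞ ‖f'‖ ≤ N ^ (-2/3) + 3 C N ^ (-1/3)`.
-/

section Oscillatory

variable {f f' : ℝ → ℂ} {a b : ℝ}

lemma hasDerivAt_neg_I_mul_exp_I_mul (x : ℝ) :
    HasDerivAt (fun y : ℝ => -Complex.I * Complex.exp (Complex.I * y))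
      (Complex.exp (Complex.I * x)) x := by
  have h := (((hasDerivAt_id x).ofReal_comp).const_mul Complex.I).cexp.const_mul (-Complex.I)
  refine h.congr_deriv ?_
  simp only [id, Complex.ofReal_one, mul_one]
  linear_combination -Complex.exp (Complex.I * x) * Complex.I_mul_I

theorem integral_mul_exp_I_mul_eq (hf : ∀ x ∈ uIcc a b, HasDerivAt f (f' x) x)
    (hf' : IntervalIntegrable f' volume a b) :
    ∫ x in a..b, f x * Complex.exp (Complex.I * x) =
      Complex.I * (f a * Complex.exp (Complex.I * a) - f b * Complex.exp (Complex.I * b) +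
        ∫ x in a..b, f' x * Complex.exp (Complex.I * x)) := by
  have hexp : Continuous fun x : ℝ => Complex.exp (Complex.I * x) := by fun_prop
  rw [integral_mul_deriv_eq_deriv_mul hf (fun x _ => hasDerivAt_neg_I_mul_exp_I_mul x) hf'
    (hexp.intervalIntegrable a b)]
  simp_rw [mul_left_comm _ (-Complex.I), intervalIntegral.integral_const_mul]
  ring

theorem exists_tendsto_integral_mul_exp_I_mul (hf : ∀ x ≥ a, DifferentiableAt ℝ f x)
    (hf' : IntegrableOn (deriv f) (Ioi a)) (hf0 : Tendsto f atTop (𝓝 0)) :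
    ∃ L : ℂ, Tendsto (fun N : ℝ => ∫ x in a..N, f x * Complex.exp (Complex.I * x)) atTop (𝓝 L) ∧
      ∀ N ≥ a, ‖L - ∫ x in a..N, f x * Complex.exp (Complex.I * x)‖ ≤
        ‖f N‖ + ∫ x in Ioi N, ‖deriv f x‖ := by
  set e : ℝ → ℂ := fun x => Complex.exp (Complex.I * x)
  have he : Continuous e := by fun_prop
  have hG : IntegrableOn (fun x => deriv f x * e x) (Ioi a) :=
    hf'.mul_bdd he.aestronglyMeasurable (ae_of_all _ fun x => (Complex.norm_exp_I_mul_ofReal x).le)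
  have hparts : ∀ N ≥ a, ∫ x in a..N, f x * e x =
      Complex.I * (f a * e a - f N * e N + ∫ x in a..N, deriv f x * e x) := fun N hN =>
    integral_mul_exp_I_mul_eq
      (fun x hx => (hf x (uIcc_of_le hN ▸ hx).1).hasDerivAt)
      ((intervalIntegrable_iff_integrableOn_Ioc_of_le hN).2 (hf'.mono_set Ioc_subset_Ioi_self))
  have hfe : Tendsto (fun N => f N * e N) atTop (𝓝 0) := by
    rw [tendsto_zero_iff_norm_tendsto_zero]
    simpa only [norm_mul, e, Complex.norm_exp_I_mul_ofReal, mul_one] using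
      (tendsto_zero_iff_norm_tendsto_zero.1 hf0)
  refine ⟨Complex.I * (f a * e a + ∫ x in Ioi a, deriv f x * e x), ?_, fun N hN => ?_⟩
  · have hlim := ((tendsto_const_nhds (x := f a * e a)).sub hfe).add
      (intervalIntegral_tendsto_integral_Ioi a hG tendsto_id)
    rw [sub_zero] at hlim
    refine (hlim.const_mul Complex.I).congr' ?_
    filter_upwards [eventually_ge_atTop a] with N hN
    exact (hparts N hN).symm
  · have htail : Complex.I * (f a * e a + ∫ x in Ioi a, deriv f x * e x) -
        ∫ x in a..N, f x * e x = Complex.I * (f N * e N + ∫ x in Ioi N, deriv f x * e x) := by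
      rw [hparts N hN, ← integral_Ioi_sub_Ioi hG hN]
      ring
    rw [htail, norm_mul, Complex.norm_I, one_mul]
    refine (norm_add_le _ _).trans (add_le_add ?_ ?_)
    · rw [norm_mul, Complex.norm_exp_I_mul_ofReal, mul_one]
    · refine (MeasureTheory.norm_integral_le_integral_norm _).trans_eq ?_
      simp only [norm_mul, e, Complex.norm_exp_I_mul_ofReal, mul_one]

end Oscillatory

lemma integrableOn_Ioi_amplitude_deriv_bound (C : ℝ) {N : ℝ} (hN : 0 < N) :
    IntegrableOn (fun x : ℝ => 2/3 * x ^ (-(5:ℝ)/3) + C * x ^ (-(4:ℝ)/3)) (Ioi N) :=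
  ((integrableOn_Ioi_rpow_of_lt (by norm_num) hN).const_mul _).add
    ((integrableOn_Ioi_rpow_of_lt (by norm_num) hN).const_mul _)

lemma integral_Ioi_amplitude_deriv_bound (C : ℝ) {N : ℝ} (hN : 0 < N) :
    ∫ x in Ioi N, (2/3 * x ^ (-(5:ℝ)/3) + C * x ^ (-(4:ℝ)/3)) =
      N ^ (-(2:ℝ)/3) + 3 * C * N ^ (-(1:ℝ)/3) := by
  rw [integral_add ((integrableOn_Ioi_rpow_of_lt (by norm_num) hN).const_mul _)
      ((integrableOn_Ioi_rpow_of_lt (by norm_num) hN).const_mul _),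
    MeasureTheory.integral_const_mul, MeasureTheory.integral_const_mul,
    integral_Ioi_rpow_of_lt (by norm_num) hN, integral_Ioi_rpow_of_lt (by norm_num) hN]
  norm_num
  ring

noncomputable def amplitude (g : ℝ → ℝ) (x : ℝ) : ℂ :=
  ((x ^ (-(2:ℝ)/3) : ℝ) : ℂ) * Complex.exp (Complex.I * g x)

section Amplitude

variable {g : ℝ → ℝ} {C x : ℝ}

lemma norm_amplitude (hx : 0 ≤ x) : ‖amplitude g x‖ = x ^ (-(2:ℝ)/3) := by
  rw [amplitude, norm_mul, Complex.norm_exp_I_mul_ofReal, mul_one, Complex.norm_real,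
    Real.norm_eq_abs, abs_of_nonneg (rpow_nonneg hx _)]

lemma tendsto_amplitude_atTop : Tendsto (amplitude g) atTop (𝓝 0) := by
  rw [tendsto_zero_iff_norm_tendsto_zero]
  have hrpow : Tendsto (fun x : ℝ => x ^ (-(2:ℝ)/3)) atTop (𝓝 0) := by
    simpa only [neg_div] using tendsto_rpow_neg_atTop (y := (2:ℝ)/3) (by norm_num)
  refine hrpow.congr' ?_
  filter_upwards [eventually_ge_atTop 0] with x hx
  exact (norm_amplitude hx).symm

lemma hasDerivAt_amplitude (hx : 0 < x) (hg : DifferentiableAt ℝ g x) :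
    HasDerivAt (amplitude g)
      (((-(2:ℝ)/3 * x ^ (-(2:ℝ)/3 - 1) : ℝ) : ℂ) * Complex.exp (Complex.I * g x) +
        ((x ^ (-(2:ℝ)/3) : ℝ) : ℂ) *
          (Complex.exp (Complex.I * g x) * (Complex.I * ((deriv g x : ℝ) : ℂ)))) x :=
  (hasDerivAt_rpow_const (Or.inl hx.ne')).ofReal_comp.mul
    ((hg.hasDerivAt.ofReal_comp.const_mul Complex.I).cexp)

lemma norm_deriv_amplitude_le (hx : 0 < x) (hg : DifferentiableAt ℝ g x)
    (hg' : |deriv g x| ≤ C * x ^ (-(2:ℝ)/3)) :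
    ‖deriv (amplitude g) x‖ ≤ 2/3 * x ^ (-(5:ℝ)/3) + C * x ^ (-(4:ℝ)/3) := by
  have hx2 : 0 ≤ x ^ (-(2:ℝ)/3) := rpow_nonneg hx.le _
  rw [(hasDerivAt_amplitude hx hg).deriv]
  calc _ ≤ 2/3 * x ^ (-(5:ℝ)/3) + x ^ (-(2:ℝ)/3) * |deriv g x| := by
        refine (norm_add_le _ _).trans_eq ?_
        simp only [norm_mul, Complex.norm_exp_I_mul_ofReal, Complex.norm_I, Complex.norm_real,
          Real.norm_eq_abs, abs_of_nonneg hx2, abs_of_nonneg (rpow_nonneg hx.le _)]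
        norm_num
    _ ≤ 2/3 * x ^ (-(5:ℝ)/3) + x ^ (-(2:ℝ)/3) * (C * x ^ (-(2:ℝ)/3)) := by gcongr
    _ = 2/3 * x ^ (-(5:ℝ)/3) + C * x ^ (-(4:ℝ)/3) := by
        rw [mul_left_comm, ← rpow_add hx]
        norm_num

lemma integrableOn_deriv_amplitude (hgdiff : ∀ ξ ≥ (1:ℝ), DifferentiableAt ℝ g ξ)
    (hg' : ∀ ξ ≥ (1:ℝ), |deriv g ξ| ≤ C * ξ ^ (-(2:ℝ)/3)) :
    IntegrableOn (deriv (amplitude g)) (Ioi 1) := by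
  refine (integrableOn_Ioi_amplitude_deriv_bound C one_pos).mono'
    (measurable_deriv _).aestronglyMeasurable ?_
  filter_upwards [ae_restrict_mem measurableSet_Ioi] with x hx
  exact norm_deriv_amplitude_le (one_pos.trans hx) (hgdiff x hx.le) (hg' x hx.le)

lemma integral_Ioi_norm_deriv_amplitude_le (hgdiff : ∀ ξ ≥ (1:ℝ), DifferentiableAt ℝ g ξ)
    (hg' : ∀ ξ ≥ (1:ℝ), |deriv g ξ| ≤ C * ξ ^ (-(2:ℝ)/3)) {N : ℝ} (hN : 1 ≤ N) :
    ∫ x in Ioi N, ‖deriv (amplitude g) x‖ ≤ N ^ (-(2:ℝ)/3) + 3 * C * N ^ (-(1:ℝ)/3) := by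
  have hN0 : 0 < N := one_pos.trans_le hN
  rw [← integral_Ioi_amplitude_deriv_bound C hN0]
  refine setIntegral_mono_on
    (IntegrableOn.mono_set (integrableOn_deriv_amplitude hgdiff hg').norm (Ioi_subset_Ioi hN))
    (integrableOn_Ioi_amplitude_deriv_bound C hN0) measurableSet_Ioi fun x hx => ?_
  have hx1 : 1 ≤ x := hN.trans (le_of_lt hx)
  exact norm_deriv_amplitude_le (hN0.trans hx) (hgdiff x hx1) (hg' x hx1)

end Amplitude

theorem stmt0_general (h g : ℝ → ℝ) (C : ℝ)
    (hhg : ∀ ξ ≥ (1:ℝ), h ξ = ξ + g ξ)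
    (hgdiff : ∀ ξ ≥ (1:ℝ), DifferentiableAt ℝ g ξ)
    (hg' : ∀ ξ ≥ (1:ℝ), |deriv g ξ| ≤ C * ξ ^ (-(2:ℝ)/3)) :
    ∃ L : ℂ,
      Tendsto (fun N : ℝ => ∫ ξ in (1:ℝ)..N,
          (↑(ξ ^ (-(2:ℝ)/3)) : ℂ) * Complex.exp (Complex.I * (h ξ : ℂ))) atTop (𝓝 L) ∧
      ∃ C' : ℝ, ∀ᶠ N : ℝ in atTop,
        ‖L - ∫ ξ in (1:ℝ)..N,
            (↑(ξ ^ (-(2:ℝ)/3)) : ℂ) * Complex.exp (Complex.I * (h ξ : ℂ))‖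
          ≤ C' * N ^ (-(1:ℝ)/3) := by
  have hintegrand : ∀ N ≥ (1:ℝ), ∫ ξ in (1:ℝ)..N,
      (↑(ξ ^ (-(2:ℝ)/3)) : ℂ) * Complex.exp (Complex.I * (h ξ : ℂ)) =
        ∫ ξ in (1:ℝ)..N, amplitude g ξ * Complex.exp (Complex.I * ξ) := fun N hN =>
    integral_congr fun ξ hξ => by
      rw [amplitude, hhg ξ (uIcc_of_le hN ▸ hξ).1, Complex.ofReal_add, mul_add, Complex.exp_add,
        mul_assoc, mul_comm (Complex.exp _)]
  obtain ⟨L, hL, htail⟩ := exists_tendsto_integral_mul_exp_I_mul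
    (fun x hx => (hasDerivAt_amplitude (one_pos.trans_le hx) (hgdiff x hx)).differentiableAt)
    (integrableOn_deriv_amplitude hgdiff hg') tendsto_amplitude_atTop
  refine ⟨L, hL.congr' ?_, 2 + 3 * C, ?_⟩
  · filter_upwards [eventually_ge_atTop 1] with N hN
    exact (hintegrand N hN).symm
  · filter_upwards [eventually_ge_atTop 1] with N hN
    have hpow : N ^ (-(2:ℝ)/3) ≤ N ^ (-(1:ℝ)/3) := rpow_le_rpow_of_exponent_le hN (by norm_num)
    rw [hintegrand N hN]
    calc _ ≤ ‖amplitude g N‖ + ∫ x in Ioi N, ‖deriv (amplitude g) x‖ := htail N hN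
      _ ≤ N ^ (-(2:ℝ)/3) + (N ^ (-(2:ℝ)/3) + 3 * C * N ^ (-(1:ℝ)/3)) :=
        add_le_add (norm_amplitude (zero_le_one.trans hN)).le
          (integral_Ioi_norm_deriv_amplitude_le hgdiff hg' hN)
      _ ≤ (2 + 3 * C) * N ^ (-(1:ℝ)/3) := by linarith

theorem stmt0 (h g : ℝ → ℝ) (C : ℝ) (hC : 0 < C)
    (hhg : ∀ ξ ≥ (1:ℝ), h ξ = ξ + g ξ)
    (hgdiff : ∀ ξ ≥ (1:ℝ), DifferentiableAt ℝ g ξ)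
    (hg' : ∀ ξ ≥ (1:ℝ), |deriv g ξ| ≤ C * ξ ^ (-(2:ℝ)/3)) :
    ∃ L : ℂ,
      Tendsto (fun N : ℝ => ∫ ξ in (1:ℝ)..N,
          (↑(ξ ^ (-(2:ℝ)/3)) : ℂ) * Complex.exp (Complex.I * (h ξ : ℂ))) atTop (𝓝 L) ∧
      ∃ C' : ℝ, ∀ᶠ N : ℝ in atTop,
        ‖L - ∫ ξ in (1:ℝ)..N,
            (↑(ξ ^ (-(2:ℝ)/3)) : ℂ) * Complex.exp (Complex.I * (h ξ : ℂ))‖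
          ≤ C' * N ^ (-(1:ℝ)/3) :=
  stmt0_general h g C hhg hgdiff hg'
end

section
/- Let h : [1,∞) → ℝ satisfy h(ξ) = ξ + g(ξ) with g differentiable, |g'(ξ)| ≤ C ξ^(-2/3), and suppose ξ₀ ≥ 1 is such that |g'(ξ)| < 1/2 for ξ > ξ₀. Then ∫_{ξ₀}^N exp(i h(ξ)) dξ = O(N^(1/3)) as N → ∞. -/
open MeasureTheory Filter Real Set intervalIntegral
open scoped Topology

/-!
Since `h' = 1 + g'`, the integrand splits as `exp (i h) = (exp (i h))' / i - g' exp (i h)`.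
The first part integrates to a number of modulus at most `2`; the second is bounded by
`∫ |g'| ≤ C ∫_{ξ₀}^N ξ^(-2/3) dξ ≤ 3 C N^(1/3)`.
-/

open Complex in
theorem norm_integral_cexp_I_mul_le_two_add {φ ψ : ℝ → ℝ} {a b : ℝ} (hab : a ≤ b)
    (hφ : ContinuousOn φ (Icc a b)) (hφ' : ∀ x ∈ Ioo a b, HasDerivAt φ (1 + ψ x) x)
    (hψ : IntervalIntegrable ψ volume a b) :
    ‖∫ x in a..b, exp (I * φ x)‖ ≤ 2 + ∫ x in a..b, |ψ x| := by
  set F : ℝ → ℂ := fun x => exp (I * φ x)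
  have hF : ∀ x, ‖F x‖ = 1 := fun x => by simp [F, norm_exp_I_mul_ofReal]
  have hFc : ContinuousOn F (Icc a b) := by fun_prop
  have hψc : IntervalIntegrable (fun x => (ψ x : ℂ)) volume a b := ⟨hψ.1.ofReal, hψ.2.ofReal⟩
  have hψF : IntervalIntegrable (fun x => (ψ x : ℂ) * F x) volume a b :=
    hψc.mul_continuousOn (by rwa [uIcc_of_le hab])
  have hF'_int : IntervalIntegrable (fun x => I * (F x + ψ x * F x)) volume a b :=
    ((hFc.intervalIntegrable_of_Icc hab).add hψF).const_mul I
  have hF' : ∀ x ∈ Ioo a b, HasDerivAt F (I * (F x + ψ x * F x)) x := fun x hx => by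
    convert ((hφ' x hx).ofReal_comp.const_mul I).cexp using 1
    push_cast; ring
  have ftc : ∫ x in a..b, I * (F x + ψ x * F x) = F b - F a :=
    integral_eq_sub_of_hasDerivAt_of_le hab hFc hF' hF'_int
  have split : ∫ x in a..b, F x = -I * (F b - F a) - ∫ x in a..b, (ψ x : ℂ) * F x := by
    rw [← ftc, ← intervalIntegral.integral_const_mul, ← integral_sub (hF'_int.const_mul _) hψF]
    congr 1; funext x; linear_combination (F x + ψ x * F x) * I_sq
  calc ‖∫ x in a..b, F x‖
      ≤ ‖-I * (F b - F a)‖ + ‖∫ x in a..b, (ψ x : ℂ) * F x‖ := split ▸ norm_sub_le _ _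
    _ ≤ 2 + ∫ x in a..b, |ψ x| := by
      gcongr
      · rw [norm_mul, norm_neg, norm_I, one_mul]
        exact (norm_sub_le _ _).trans (by rw [hF, hF]; norm_num)
      · refine (intervalIntegral.norm_integral_le_integral_norm hab).trans_eq ?_
        simp [hF]

theorem IntervalIntegrable.of_abs_le {ψ w : ℝ → ℝ} {a b : ℝ} (hab : a ≤ b)
    (hw : IntervalIntegrable w volume a b) (hψ : Measurable ψ)
    (hbound : ∀ x ∈ Icc a b, |ψ x| ≤ w x) : IntervalIntegrable ψ volume a b :=
  hw.mono_fun' hψ.aestronglyMeasurable <| by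
    rw [uIoc_of_le hab]
    filter_upwards [ae_restrict_mem measurableSet_Ioc] with x hx
    exact hbound x (Ioc_subset_Icc_self hx)

theorem integral_abs_le_three_mul_rpow_one_third {ψ : ℝ → ℝ} {a b C : ℝ} (ha : 0 ≤ a)
    (hab : a ≤ b) (hC : 0 ≤ C) (hψ : IntervalIntegrable ψ volume a b)
    (hbound : ∀ x ∈ Icc a b, |ψ x| ≤ C * x ^ (-(2:ℝ)/3)) :
    ∫ x in a..b, |ψ x| ≤ 3 * C * b ^ ((1:ℝ)/3) := calc
  ∫ x in a..b, |ψ x| ≤ ∫ x in a..b, C * x ^ (-(2:ℝ)/3) :=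
    integral_mono_on hab hψ.abs ((intervalIntegrable_rpow' (by norm_num)).const_mul C) hbound
  _ = 3 * C * (b ^ ((1:ℝ)/3) - a ^ ((1:ℝ)/3)) := by
    rw [intervalIntegral.integral_const_mul, integral_rpow (Or.inl (by norm_num))]
    norm_num; ring
  _ ≤ 3 * C * b ^ ((1:ℝ)/3) := by
    have := rpow_nonneg ha ((1:ℝ)/3)
    gcongr; linarith

theorem stmt1_general (h g : ℝ → ℝ) (C : ℝ) (ξ₀ : ℝ) (hξ₀ : 1 ≤ ξ₀)
    (hhg : ∀ ξ ≥ (1:ℝ), h ξ = ξ + g ξ)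
    (hgdiff : ∀ ξ ≥ (1:ℝ), DifferentiableAt ℝ g ξ)
    (hg' : ∀ ξ ≥ (1:ℝ), |deriv g ξ| ≤ C * ξ ^ (-(2:ℝ)/3)) :
    ∃ C' : ℝ, ∀ᶠ N : ℝ in atTop,
      ‖∫ ξ in ξ₀..N, Complex.exp (Complex.I * (h ξ : ℂ))‖ ≤ C' * N ^ ((1:ℝ)/3) := by
  have hC : 0 ≤ C := by simpa using (abs_nonneg _).trans (hg' 1 le_rfl)
  refine ⟨2 + 3 * C, ?_⟩
  filter_upwards [eventually_ge_atTop ξ₀] with N hN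
  have one_le : ∀ ξ ∈ Icc ξ₀ N, 1 ≤ ξ := fun ξ hξ => hξ₀.trans hξ.1
  have hcont : ContinuousOn h (Icc ξ₀ N) := fun ξ hξ =>
    (continuousAt_id.add (hgdiff ξ (one_le ξ hξ)).continuousAt).continuousWithinAt.congr
      (fun x hx => hhg x (one_le x hx)) (hhg ξ (one_le ξ hξ))
  have hderiv : ∀ ξ ∈ Ioo ξ₀ N, HasDerivAt h (1 + deriv g ξ) ξ := fun ξ hξ =>
    ((hasDerivAt_id ξ).add (hgdiff ξ (one_le ξ (Ioo_subset_Icc_self hξ))).hasDerivAt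
      ).congr_of_eventuallyEq (eventually_ge_nhds (hξ₀.trans_lt hξ.1) |>.mono hhg)
  have hbound : ∀ ξ ∈ Icc ξ₀ N, |deriv g ξ| ≤ C * ξ ^ (-(2:ℝ)/3) := fun ξ hξ =>
    hg' ξ (one_le ξ hξ)
  have hint : IntervalIntegrable (deriv g) volume ξ₀ N :=
    .of_abs_le hN ((intervalIntegrable_rpow' (by norm_num)).const_mul C) (measurable_deriv g)
      hbound
  have hN1 : 1 ≤ N ^ ((1:ℝ)/3) := one_le_rpow (hξ₀.trans hN) (by norm_num)
  calc ‖∫ ξ in ξ₀..N, Complex.exp (Complex.I * (h ξ : ℂ))‖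
      ≤ 2 + ∫ ξ in ξ₀..N, |deriv g ξ| := norm_integral_cexp_I_mul_le_two_add hN hcont hderiv hint
    _ ≤ 2 + 3 * C * N ^ ((1:ℝ)/3) := by
      gcongr; exact integral_abs_le_three_mul_rpow_one_third (by linarith) hN hC hint hbound
    _ ≤ (2 + 3 * C) * N ^ ((1:ℝ)/3) := by nlinarith

theorem stmt1 (h g : ℝ → ℝ) (C : ℝ) (hC : 0 < C) (ξ₀ : ℝ) (hξ₀ : 1 ≤ ξ₀)
    (hhg : ∀ ξ ≥ (1:ℝ), h ξ = ξ + g ξ)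
    (hgdiff : ∀ ξ ≥ (1:ℝ), DifferentiableAt ℝ g ξ)
    (hg' : ∀ ξ ≥ (1:ℝ), |deriv g ξ| ≤ C * ξ ^ (-(2:ℝ)/3))
    (hg'small : ∀ ξ > ξ₀, |deriv g ξ| < 1/2) :
    ∃ C' : ℝ, ∀ᶠ N : ℝ in atTop,
      ‖∫ ξ in ξ₀..N, Complex.exp (Complex.I * (h ξ : ℂ))‖ ≤ C' * N ^ ((1:ℝ)/3) :=
  stmt1_general h g C ξ₀ hξ₀ hhg hgdiff hg'
end

section
/- Let γ, σ : [1,∞) → ℝ be C¹ functions with γ'(ξ) = b(ξ) cos(γ(ξ)+σ(ξ)) where b is continuous with |b(ξ)| ≤ C ξ^(−2/3), and suppose the improper integrals S(ξ) = ∫_ξ^∞ b(η) sin(σ(η)) dη and K(ξ) = ∫_ξ^∞ b(η) cos(σ(η)) dη exist and satisfy |S(ξ)|, |K(ξ)| ≤ C ξ^(−δ) for some δ > 1/6. Then the improper integral ∫₁^∞ b(ξ) sin(γ(ξ)+σ(ξ)) dξ converges. -/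
open MeasureTheory Filter Real Set intervalIntegral
open scoped Topology

/-!
Let `A` and `B` be the tails `S` and `K`, extended to antiderivatives of `-b sin σ` and
`-b cos σ`, and let `(P, Q) = (cos γ · B - sin γ · A, sin γ · B + cos γ · A)` be the vector `(B, A)`
rotated by the angle `γ`. Writing `sin (γ + σ) = sin γ cos σ + cos γ sin σ` and integrating by parts
twice, using `γ' = b cos (γ + σ) = sin γ · A' - cos γ · B'`, gives
`b sin (γ + σ) = -(Q + P² / 2)' - γ' P Q`.
The potential `Q + P² / 2` tends to `0` with `S` and `K`, and since `P² + Q² = A² + B²`,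
`|γ' P Q| ≤ C ξ^(-2/3) · C² ξ^(-2δ)`, which is integrable because `2/3 + 2δ > 1`.
-/

theorem tendsto_intervalIntegral_of_hasDerivAt_add {f R W : ℝ → ℝ} {a w : ℝ}
    (hW : ∀ x ≥ a, HasDerivAt W (f x + R x) x) (hf : ∀ N, IntervalIntegrable f volume a N)
    (hR : IntegrableOn R (Ioi a)) (hWlim : Tendsto W atTop (𝓝 w)) :
    Tendsto (fun N => ∫ x in a..N, f x) atTop (𝓝 (w - W a - ∫ x in Ioi a, R x)) := by
  have hRlim := intervalIntegral_tendsto_integral_Ioi a hR tendsto_id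
  refine ((hWlim.sub_const (W a)).sub hRlim).congr' ?_
  filter_upwards [eventually_ge_atTop a] with N hN
  have hRN : IntervalIntegrable R volume a N :=
    (intervalIntegrable_iff_integrableOn_Ioc_of_le hN).2 (hR.mono_set Ioc_subset_Ioi_self)
  have hftc : ∫ x in a..N, (f x + R x) = W N - W a :=
    integral_eq_sub_of_hasDerivAt (fun x hx => hW x (uIcc_of_le hN ▸ hx).1) ((hf N).add hRN)
  rw [integral_add (hf N) hRN] at hftc
  simp only [id]
  linarith

theorem exists_hasDerivAt_eqOn_of_tendsto_integral {g T : ℝ → ℝ} {a : ℝ} (hg : Continuous g)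
    (hT : ∀ ξ ≥ a, Tendsto (fun N => ∫ η in ξ..N, g η) atTop (𝓝 (T ξ))) :
    ∃ F : ℝ → ℝ, (∀ x, HasDerivAt F (-g x) x) ∧ EqOn F T (Ici a) := by
  refine ⟨fun x => T a - ∫ η in a..x, g η,
    fun x => (hg.integral_hasStrictDerivAt a x).hasDerivAt.const_sub (T a), fun ξ hξ => ?_⟩
  have hsplit : Tendsto (fun N => ∫ η in a..N, g η) atTop (𝓝 ((∫ η in a..ξ, g η) + T ξ)) :=
    (tendsto_const_nhds.add (hT ξ hξ)).congr fun N =>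
      integral_add_adjacent_intervals (hg.intervalIntegrable a ξ) (hg.intervalIntegrable ξ N)
  have hunique := tendsto_nhds_unique (hT a le_rfl) hsplit
  simp only
  linarith

theorem tendsto_zero_of_abs_le_mul_rpow {f : ℝ → ℝ} {a c p : ℝ} (hp : p < 0)
    (hf : ∀ x ≥ a, |f x| ≤ c * x ^ p) : Tendsto f atTop (𝓝 0) := by
  have hlim : Tendsto (fun x : ℝ => c * x ^ p) atTop (𝓝 0) := by
    simpa using (tendsto_rpow_neg_atTop (neg_pos.2 hp)).const_mul c
  refine squeeze_zero_norm' ?_ hlim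
  filter_upwards [eventually_ge_atTop a] with x hx using hf x hx

theorem integrableOn_Ioi_of_abs_le_mul_rpow {f : ℝ → ℝ} {a c p : ℝ} (ha : 0 < a) (hp : p < -1)
    (hf : AEStronglyMeasurable f (volume.restrict (Ioi a))) (hbound : ∀ x > a, |f x| ≤ c * x ^ p) :
    IntegrableOn f (Ioi a) :=
  ((integrableOn_Ioi_rpow_of_lt hp ha).const_mul c).mono' hf <|
    (ae_restrict_iff' measurableSet_Ioi).2 (ae_of_all _ hbound)

section Rotation

variable (γ A B : ℝ → ℝ)

noncomputable def rotFst (ξ : ℝ) : ℝ := cos (γ ξ) * B ξ - sin (γ ξ) * A ξ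

noncomputable def rotSnd (ξ : ℝ) : ℝ := sin (γ ξ) * B ξ + cos (γ ξ) * A ξ

noncomputable def rotPotential (ξ : ℝ) : ℝ := rotSnd γ A B ξ + rotFst γ A B ξ ^ 2 / 2

variable {γ A B}

theorem rotFst_sq_add_rotSnd_sq (ξ : ℝ) :
    rotFst γ A B ξ ^ 2 + rotSnd γ A B ξ ^ 2 = A ξ ^ 2 + B ξ ^ 2 := by
  simp only [rotFst, rotSnd]
  linear_combination (A ξ ^ 2 + B ξ ^ 2) * sin_sq_add_cos_sq (γ ξ)

theorem abs_rotFst_mul_rotSnd_le (ξ : ℝ) :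
    |rotFst γ A B ξ * rotSnd γ A B ξ| ≤ (A ξ ^ 2 + B ξ ^ 2) / 2 := by
  rw [← rotFst_sq_add_rotSnd_sq (γ := γ), abs_le]
  constructor <;> linarith [sq_nonneg (rotFst γ A B ξ + rotSnd γ A B ξ),
    sq_nonneg (rotFst γ A B ξ - rotSnd γ A B ξ)]

theorem abs_rotFst_le (ξ : ℝ) : |rotFst γ A B ξ| ≤ |A ξ| + |B ξ| := by
  refine abs_le_of_sq_le_sq ?_ (by positivity)
  nlinarith [rotFst_sq_add_rotSnd_sq (γ := γ) (A := A) (B := B) ξ, sq_nonneg (rotSnd γ A B ξ),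
    sq_abs (A ξ), sq_abs (B ξ), mul_nonneg (abs_nonneg (A ξ)) (abs_nonneg (B ξ))]

theorem abs_rotSnd_le (ξ : ℝ) : |rotSnd γ A B ξ| ≤ |A ξ| + |B ξ| := by
  refine abs_le_of_sq_le_sq ?_ (by positivity)
  nlinarith [rotFst_sq_add_rotSnd_sq (γ := γ) (A := A) (B := B) ξ, sq_nonneg (rotFst γ A B ξ),
    sq_abs (A ξ), sq_abs (B ξ), mul_nonneg (abs_nonneg (A ξ)) (abs_nonneg (B ξ))]

theorem tendsto_rotPotential {l : Filter ℝ} (hA : Tendsto A l (𝓝 0)) (hB : Tendsto B l (𝓝 0)) :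
    Tendsto (rotPotential γ A B) l (𝓝 0) := by
  have hAB : Tendsto (fun ξ => |A ξ| + |B ξ|) l (𝓝 0) := by
    simpa using hA.abs.add hB.abs
  have hP := squeeze_zero_norm (f := rotFst γ A B) abs_rotFst_le hAB
  have hQ := squeeze_zero_norm (f := rotSnd γ A B) abs_rotSnd_le hAB
  have hlim := hQ.add ((hP.pow 2).div_const 2)
  rwa [zero_pow two_ne_zero, zero_div, add_zero] at hlim

theorem abs_mul_rotFst_mul_rotSnd_le {β u v ξ : ℝ} (hβ : |β| ≤ u) (hA : |A ξ| ≤ v)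
    (hB : |B ξ| ≤ v) : |β * (rotFst γ A B ξ * rotSnd γ A B ξ)| ≤ u * v ^ 2 := by
  have hA2 : A ξ ^ 2 ≤ v ^ 2 := sq_le_sq' (neg_le_of_abs_le hA) (le_of_abs_le hA)
  have hB2 : B ξ ^ 2 ≤ v ^ 2 := sq_le_sq' (neg_le_of_abs_le hB) (le_of_abs_le hB)
  rw [abs_mul]
  calc |β| * |rotFst γ A B ξ * rotSnd γ A B ξ| ≤ u * ((A ξ ^ 2 + B ξ ^ 2) / 2) :=
        mul_le_mul hβ (abs_rotFst_mul_rotSnd_le ξ) (abs_nonneg _) ((abs_nonneg β).trans hβ)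
    _ ≤ u * v ^ 2 := mul_le_mul_of_nonneg_left (by linarith) ((abs_nonneg β).trans hβ)

theorem abs_mul_rotFst_mul_rotSnd_le_mul_rpow {β c p q ξ : ℝ} (hξ : 0 < ξ)
    (hβ : |β| ≤ c * ξ ^ p) (hA : |A ξ| ≤ c * ξ ^ q) (hB : |B ξ| ≤ c * ξ ^ q) :
    |β * (rotFst γ A B ξ * rotSnd γ A B ξ)| ≤ c ^ 3 * ξ ^ (p + 2 * q) := by
  calc |β * (rotFst γ A B ξ * rotSnd γ A B ξ)| ≤ c * ξ ^ p * (c * ξ ^ q) ^ 2 :=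
        abs_mul_rotFst_mul_rotSnd_le hβ hA hB
    _ = c ^ 3 * ξ ^ (p + 2 * q) := by
        rw [two_mul, rpow_add hξ, rpow_add hξ]
        ring

theorem Continuous.rotFst_mul_rotSnd (hγ : Continuous γ) (hA : Continuous A)
    (hB : Continuous B) : Continuous fun ξ => rotFst γ A B ξ * rotSnd γ A B ξ := by
  unfold rotFst rotSnd
  fun_prop

theorem hasDerivAt_rotPotential {x β s : ℝ} (hγ : HasDerivAt γ (β * cos (γ x + s)) x)
    (hA : HasDerivAt A (-(β * sin s)) x) (hB : HasDerivAt B (-(β * cos s)) x) :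
    HasDerivAt (rotPotential γ A B)
      (-(β * sin (γ x + s)) - β * cos (γ x + s) * (rotFst γ A B x * rotSnd γ A B x)) x := by
  have hP : HasDerivAt (rotFst γ A B) _ x := (hγ.cos.mul hB).sub (hγ.sin.mul hA)
  have hQ : HasDerivAt (rotSnd γ A B) _ x := (hγ.sin.mul hB).add (hγ.cos.mul hA)
  refine (hQ.add ((hP.pow 2).div_const 2)).congr_deriv ?_
  simp only [rotFst, rotSnd, sin_add, cos_add]
  ring

end Rotation

theorem stmt15_general (γ σ b S K : ℝ → ℝ) (C δ : ℝ) (hδ : 1/6 < δ)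
    (hγ : ContDiff ℝ 1 γ) (hσ : ContDiff ℝ 1 σ) (hb : Continuous b)
    (hγ' : ∀ ξ ≥ (1:ℝ), deriv γ ξ = b ξ * Real.cos (γ ξ + σ ξ))
    (hbbd : ∀ ξ ≥ (1:ℝ), |b ξ| ≤ C * ξ ^ (-(2:ℝ)/3))
    (hS : ∀ ξ ≥ (1:ℝ),
      Tendsto (fun N : ℝ => ∫ η in ξ..N, b η * Real.sin (σ η)) atTop (𝓝 (S ξ)))
    (hK : ∀ ξ ≥ (1:ℝ),
      Tendsto (fun N : ℝ => ∫ η in ξ..N, b η * Real.cos (σ η)) atTop (𝓝 (K ξ)))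
    (hSbd : ∀ ξ ≥ (1:ℝ), |S ξ| ≤ C * ξ ^ (-δ))
    (hKbd : ∀ ξ ≥ (1:ℝ), |K ξ| ≤ C * ξ ^ (-δ)) :
    ∃ L : ℝ,
      Tendsto (fun N : ℝ => ∫ ξ in (1:ℝ)..N, b ξ * Real.sin (γ ξ + σ ξ)) atTop (𝓝 L) := by
  have hγc := hγ.continuous
  have hσc := hσ.continuous
  obtain ⟨A, hA, hAS⟩ :=
    exists_hasDerivAt_eqOn_of_tendsto_integral (hb.mul (continuous_sin.comp hσc)) hS
  obtain ⟨B, hB, hBK⟩ :=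
    exists_hasDerivAt_eqOn_of_tendsto_integral (hb.mul (continuous_cos.comp hσc)) hK
  have hAbd : ∀ ξ ≥ (1:ℝ), |A ξ| ≤ C * ξ ^ (-δ) := fun ξ hξ => hAS hξ ▸ hSbd ξ hξ
  have hBbd : ∀ ξ ≥ (1:ℝ), |B ξ| ≤ C * ξ ^ (-δ) := fun ξ hξ => hBK hξ ▸ hKbd ξ hξ
  set R := fun ξ => b ξ * cos (γ ξ + σ ξ) * (rotFst γ A B ξ * rotSnd γ A B ξ)
  have hRc : Continuous R := (hb.mul (continuous_cos.comp (hγc.add hσc))).mul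
    (hγc.rotFst_mul_rotSnd (continuous_iff_continuousAt.2 fun x => (hA x).continuousAt)
      (continuous_iff_continuousAt.2 fun x => (hB x).continuousAt))
  have hRbd : ∀ ξ > (1:ℝ), |R ξ| ≤ C ^ 3 * ξ ^ (-(2:ℝ)/3 + 2 * -δ) := fun ξ hξ =>
    abs_mul_rotFst_mul_rotSnd_le_mul_rpow (one_pos.trans hξ)
      ((abs_mul _ _).trans_le <| (mul_le_of_le_one_right (abs_nonneg _) (abs_cos_le_one _)).trans
        (hbbd ξ hξ.le)) (hAbd ξ hξ.le) (hBbd ξ hξ.le)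
  have hW : ∀ ξ ≥ (1:ℝ), HasDerivAt (-rotPotential γ A B) (b ξ * sin (γ ξ + σ ξ) + R ξ) ξ :=
    fun ξ hξ => (hasDerivAt_rotPotential (hγ' ξ hξ ▸ (hγ.differentiable one_ne_zero ξ).hasDerivAt)
      (hA ξ) (hB ξ)).neg.congr_deriv (by ring)
  have hWlim : Tendsto (-rotPotential γ A B) atTop (𝓝 0) := by
    have hlim := (tendsto_rotPotential (γ := γ) (tendsto_zero_of_abs_le_mul_rpow (by linarith) hAbd)
      (tendsto_zero_of_abs_le_mul_rpow (by linarith) hBbd)).neg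
    rwa [neg_zero] at hlim
  exact ⟨_, tendsto_intervalIntegral_of_hasDerivAt_add hW
    (fun N => (hb.mul (continuous_sin.comp (hγc.add hσc))).intervalIntegrable 1 N)
    (integrableOn_Ioi_of_abs_le_mul_rpow one_pos (by linarith) hRc.aestronglyMeasurable hRbd)
    hWlim⟩

theorem stmt15 (γ σ b S K : ℝ → ℝ) (C δ : ℝ) (hC : 0 < C) (hδ : 1/6 < δ)
    (hγ : ContDiff ℝ 1 γ) (hσ : ContDiff ℝ 1 σ) (hb : Continuous b)
    (hγ' : ∀ ξ ≥ (1:ℝ), deriv γ ξ = b ξ * Real.cos (γ ξ + σ ξ))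
    (hbbd : ∀ ξ ≥ (1:ℝ), |b ξ| ≤ C * ξ ^ (-(2:ℝ)/3))
    (hS : ∀ ξ ≥ (1:ℝ),
      Tendsto (fun N : ℝ => ∫ η in ξ..N, b η * Real.sin (σ η)) atTop (𝓝 (S ξ)))
    (hK : ∀ ξ ≥ (1:ℝ),
      Tendsto (fun N : ℝ => ∫ η in ξ..N, b η * Real.cos (σ η)) atTop (𝓝 (K ξ)))
    (hSbd : ∀ ξ ≥ (1:ℝ), |S ξ| ≤ C * ξ ^ (-δ))
    (hKbd : ∀ ξ ≥ (1:ℝ), |K ξ| ≤ C * ξ ^ (-δ)) :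
    ∃ L : ℝ,
      Tendsto (fun N : ℝ => ∫ ξ in (1:ℝ)..N, b ξ * Real.sin (γ ξ + σ ξ)) atTop (𝓝 L) :=
  stmt15_general γ σ b S K C δ hδ hγ hσ hb hγ' hbbd hS hK hSbd hKbd
end

section
/- For almost every λ ∈ ℝ (explicitly, whenever the relevant maximal function is finite at λ), for every nontrivial solution ω of equation −ω'' + V(·,λ)ω = ω with ∫₁^∞ V(ξ,λ) sin(2θ(ξ,λ)) dξ convergent and |V(ξ,λ)| ≤ C(1+ξ)^(−2/3), there exist constants 0 < c₁ ≤ c₂ and a function r with |r'(ξ)| ≤ C(1+ξ)^(−2/3) such that ω(ξ) = A sin(ξ + r(ξ))(1 + o(1)) as ξ → ∞ for some A ≠ 0; in particular every solution is bounded and bounded away from having L²-norm ratio tending to 0 against any other solution. -/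
/-!
Write `ω' + iω = √W · e^{iφ}` with `W = ω² + ω'²`. Along a solution of `-ω'' + Vω = ω` one has
`W' / W = 2ω'(ω + ω'') / W = V sin 2θ` and `φ' = 1 - V ω² / W`, so `|φ' - 1| ≤ |V|`. Convergence of
`∫ V sin 2θ` is therefore convergence of `log W`: the amplitude `√W` tends to some `A > 0`, and
`ω = A sin (ξ + r ξ) (1 + o(1))` with `r = φ - ξ`. The phase `φ` is built as the integral of its
rate rather than taken from `θ`, whose regularity is unknown.
-/

open MeasureTheory Filter Real Set intervalIntegral
open scoped Topology

lemma eq_of_continuousOn_Ici_of_hasDerivAt_zero {g : ℝ → ℝ} {a : ℝ}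
    (hcont : ContinuousOn g (Ici a)) (hderiv : ∀ x > a, HasDerivAt g 0 x) :
    ∀ x ≥ a, g x = g a := by
  intro x hx
  rcases hx.eq_or_lt with rfl | hax
  · rfl
  obtain ⟨_, _, hslope⟩ := exists_hasDerivAt_eq_slope g (fun _ => 0) hax
    (hcont.mono Icc_subset_Ici_self) (fun y hy => hderiv y hy.1)
  rw [eq_comm, div_eq_zero_iff, sub_eq_zero, sub_eq_zero] at hslope
  exact hslope.resolve_right hax.ne'

lemma le_of_continuousOn_Ici_of_forall_Ioi {g h : ℝ → ℝ} {a : ℝ}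
    (hg : ContinuousOn g (Ici a)) (hh : ContinuousOn h (Ici a)) (hle : ∀ x > a, g x ≤ h x) :
    ∀ x ≥ a, g x ≤ h x := fun x hx =>
  ContinuousWithinAt.closure_le (by rwa [closure_Ioi]) ((hg x hx).mono Ioi_subset_Ici_self)
    ((hh x hx).mono Ioi_subset_Ici_self) hle

lemma exists_abs_le_of_continuousOn_Ici_of_tendsto {g : ℝ → ℝ} {a L : ℝ}
    (hg : ContinuousOn g (Ici a)) (hlim : Tendsto g atTop (𝓝 L)) :
    ∃ M, ∀ x ≥ a, |g x| ≤ M := by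
  obtain ⟨T, hT⟩ := eventually_atTop.1 (hlim.abs.eventually_le_const (lt_add_one |L|))
  obtain ⟨B, hB⟩ := (isCompact_Icc (a := a) (b := T)).exists_bound_of_continuousOn
    (hg.mono Icc_subset_Ici_self)
  refine ⟨max B (|L| + 1), fun x hx => ?_⟩
  rcases le_total x T with hxT | hTx
  · exact (hB x ⟨hx, hxT⟩).trans (le_max_left _ _)
  · exact (hT x hTx).trans (le_max_right _ _)

lemma hasDerivAt_derivWithin_of_contDiffOn_Ici {g : ℝ → ℝ} {a x : ℝ} {n : WithTop ℕ∞}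
    (hg : ContDiffOn ℝ n g (Ici a)) (hn : n ≠ 0) (hx : a < x) :
    HasDerivAt g (derivWithin g (Ici a) x) x := by
  have hmem : Ici a ∈ 𝓝 x := Ici_mem_nhds hx
  rw [derivWithin_of_mem_nhds hmem]
  exact ((hg.contDiffAt hmem).differentiableAt hn).hasDerivAt

lemma derivWithin_derivWithin_Ici_eq_deriv_deriv {g : ℝ → ℝ} {a x : ℝ} (hx : a < x) :
    derivWithin (derivWithin g (Ici a)) (Ici a) x = deriv (deriv g) x := by
  rw [derivWithin_of_mem_nhds (Ici_mem_nhds hx)]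
  refine EventuallyEq.deriv_eq ?_
  filter_upwards [Ioi_mem_nhds hx] with y hy using derivWithin_of_mem_nhds (Ici_mem_nhds hy)

section Prufer

variable {f : ℝ → ℝ} {a : ℝ}

noncomputable def pruferEnergy (f : ℝ → ℝ) (a x : ℝ) : ℝ :=
  f x ^ 2 + derivWithin f (Ici a) x ^ 2

/-- The rate is frozen to the left of `a`, so that the phase has a two-sided derivative at `a`;
the initial value is the angle of `(f' a, f a)`. -/
noncomputable def pruferPhaseRate (f : ℝ → ℝ) (a x : ℝ) : ℝ :=
  (derivWithin f (Ici a) x ^ 2 - f x * derivWithin (derivWithin f (Ici a)) (Ici a) x) /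
    pruferEnergy f a x

/-- The rate is frozen to the left of `a`, so that the phase has a two-sided derivative at `a`;
the initial value is the angle of `(f' a, f a)`. -/
noncomputable def pruferPhase (f : ℝ → ℝ) (a x : ℝ) : ℝ :=
  Complex.arg ⟨derivWithin f (Ici a) a, f a⟩ + ∫ t in a..x, pruferPhaseRate f a (max t a)

lemma continuousOn_pruferEnergy (hf : ContDiffOn ℝ 1 f (Ici a)) :
    ContinuousOn (pruferEnergy f a) (Ici a) :=
  (hf.continuousOn.pow 2).add
    ((hf.continuousOn_derivWithin (uniqueDiffOn_Ici a) le_rfl).pow 2)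

lemma continuousOn_pruferPhaseRate (hf : ContDiffOn ℝ 2 f (Ici a))
    (hW : ∀ x ≥ a, 0 < pruferEnergy f a x) :
    ContinuousOn (pruferPhaseRate f a) (Ici a) := by
  have hf' := hf.derivWithin (uniqueDiffOn_Ici a) (m := 1) (by norm_num)
  refine ContinuousOn.div ?_ (continuousOn_pruferEnergy (hf.of_le (by norm_num)))
    fun x hx => (hW x hx).ne'
  exact (hf'.continuousOn.pow 2).sub
    (hf.continuousOn.mul (hf'.continuousOn_derivWithin (uniqueDiffOn_Ici a) le_rfl))

lemma hasDerivAt_pruferEnergy (hf : ContDiffOn ℝ 2 f (Ici a)) {x : ℝ} (hx : a < x) :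
    HasDerivAt (pruferEnergy f a) (2 * derivWithin f (Ici a) x *
      (f x + derivWithin (derivWithin f (Ici a)) (Ici a) x)) x := by
  have hf' := hf.derivWithin (uniqueDiffOn_Ici a) (m := 1) (by norm_num)
  have h := ((hasDerivAt_derivWithin_of_contDiffOn_Ici hf (by norm_num) hx).pow 2).add
    ((hasDerivAt_derivWithin_of_contDiffOn_Ici hf' (by norm_num) hx).pow 2)
  exact h.congr_deriv (by push_cast; ring)

lemma hasDerivAt_pruferPhase (hf : ContDiffOn ℝ 2 f (Ici a))
    (hW : ∀ x ≥ a, 0 < pruferEnergy f a x) (x : ℝ) :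
    HasDerivAt (pruferPhase f a) (pruferPhaseRate f a (max x a)) x := by
  have hrate : Continuous fun t => pruferPhaseRate f a (max t a) :=
    (continuousOn_pruferPhaseRate hf hW).comp_continuous (continuous_id.max continuous_const)
      fun t => le_max_right t a
  exact ((hrate.integral_hasStrictDerivAt a x).hasDerivAt).const_add _

/-- `(f' + i f) e^{-iφ}` has the real logarithmic derivative `W' / 2W`, so dividing it by `√W`
leaves a constant; the numerator here is the imaginary part of `(f' + i f) e^{-i(φ + α)}`. -/
lemma hasDerivAt_rotate_div_sqrt_pruferEnergy (hf : ContDiffOn ℝ 2 f (Ici a))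
    (hW : ∀ x ≥ a, 0 < pruferEnergy f a x) (α : ℝ) {x : ℝ} (hx : a < x) :
    HasDerivAt (fun t => (f t * cos (pruferPhase f a t + α) -
      derivWithin f (Ici a) t * sin (pruferPhase f a t + α)) / √(pruferEnergy f a t)) 0 x := by
  have hf' := hf.derivWithin (uniqueDiffOn_Ici a) (m := 1) (by norm_num)
  have hu := hasDerivAt_derivWithin_of_contDiffOn_Ici hf (by norm_num) hx
  have hv := hasDerivAt_derivWithin_of_contDiffOn_Ici hf' (by norm_num) hx
  have hφ := (hasDerivAt_pruferPhase hf hW x).add_const α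
  rw [max_eq_left hx.le] at hφ
  have hWx := hW x hx.le
  have hS := (hasDerivAt_pruferEnergy hf hx).sqrt hWx.ne'
  refine (((hu.mul hφ.cos).sub (hv.mul hφ.sin)).div hS (sqrt_pos.2 hWx).ne').congr_deriv ?_
  have hsq : √(pruferEnergy f a x) ^ 2 = pruferEnergy f a x := sq_sqrt hWx.le
  refine div_eq_zero_iff.2 (Or.inl ?_)
  simp only [pruferPhaseRate, Pi.sub_apply, Pi.mul_apply]
  field_simp
  rw [hsq]
  unfold pruferEnergy
  ring

lemma pruferPhase_self : pruferPhase f a a = Complex.arg ⟨derivWithin f (Ici a) a, f a⟩ := by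
  simp [pruferPhase]

lemma norm_mk_derivWithin_eq_sqrt_pruferEnergy :
    ‖(⟨derivWithin f (Ici a) a, f a⟩ : ℂ)‖ = √(pruferEnergy f a a) := by
  rw [Complex.norm_eq_sqrt_sq_add_sq, pruferEnergy, add_comm]

lemma sin_pruferPhase_self : sin (pruferPhase f a a) = f a / √(pruferEnergy f a a) := by
  rw [pruferPhase_self, Complex.sin_arg, norm_mk_derivWithin_eq_sqrt_pruferEnergy]

lemma cos_pruferPhase_self (hW : 0 < pruferEnergy f a a) :
    cos (pruferPhase f a a) = derivWithin f (Ici a) a / √(pruferEnergy f a a) := by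
  have hz := norm_mk_derivWithin_eq_sqrt_pruferEnergy (f := f) (a := a)
  rw [pruferPhase_self, Complex.cos_arg (norm_ne_zero_iff.1 (hz ▸ (sqrt_pos.2 hW).ne')), hz]

lemma eq_sqrt_pruferEnergy_mul_sin_pruferPhase (hf : ContDiffOn ℝ 2 f (Ici a))
    (hW : ∀ x ≥ a, 0 < pruferEnergy f a x) :
    ∀ x ≥ a, f x = √(pruferEnergy f a x) * sin (pruferPhase f a x) := by
  set φ := pruferPhase f a
  set f' := derivWithin f (Ici a)
  set S := fun t => √(pruferEnergy f a t)
  have hφ : Continuous φ :=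
    continuous_iff_continuousAt.2 fun x => (hasDerivAt_pruferPhase hf hW x).continuousAt
  have hrotate (α : ℝ) : ∀ x ≥ a, (f x * cos (φ x + α) - f' x * sin (φ x + α)) / S x =
      (f a * cos (φ a + α) - f' a * sin (φ a + α)) / S a := by
    refine eq_of_continuousOn_Ici_of_hasDerivAt_zero ?_
      fun x hx => hasDerivAt_rotate_div_sqrt_pruferEnergy hf hW α hx
    refine ContinuousOn.div ?_ (continuousOn_pruferEnergy (hf.of_le (by norm_num))).sqrt
      fun x hx => (sqrt_pos.2 (hW x hx)).ne'
    have hf' := hf.continuousOn_derivWithin (uniqueDiffOn_Ici a) (by norm_num)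
    have hfc := hf.continuousOn
    fun_prop
  have hWa := hW a le_rfl
  have hSa : S a ^ 2 = f a ^ 2 + f' a ^ 2 := sq_sqrt hWa.le
  have hSa_pos : 0 < S a := sqrt_pos.2 hWa
  have hcos : cos (φ a) = f' a / S a := cos_pruferPhase_self hWa
  have hsin : sin (φ a) = f a / S a := sin_pruferPhase_self
  have hinit0 : f a * cos (φ a) - f' a * sin (φ a) = 0 := by
    rw [hcos, hsin]
    ring
  have hinit1 : f a * sin (φ a) + f' a * cos (φ a) = S a := by
    rw [hcos, hsin]
    field_simp
    linear_combination -hSa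
  intro x hx
  -- `α = 0` gives `f cos φ = f' sin φ`, and `α = -π/2` gives `f sin φ + f' cos φ = √W`.
  have h0 := hrotate 0 x hx
  have h1 := hrotate (-(π / 2)) x hx
  simp only [add_zero, ← sub_eq_add_neg, cos_sub_pi_div_two, sin_sub_pi_div_two, mul_neg,
    sub_neg_eq_add, hinit0, hinit1, zero_div, div_self hSa_pos.ne'] at h0 h1
  have hSx : S x ≠ 0 := (sqrt_pos.2 (hW x hx)).ne'
  rw [div_eq_zero_iff, or_iff_left hSx] at h0
  rw [div_eq_one_iff_eq hSx] at h1
  linear_combination sin (φ x) * h1 + cos (φ x) * h0 - f x * sin_sq_add_cos_sq (φ x)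

lemma integral_logDeriv_pruferEnergy (hf : ContDiffOn ℝ 2 f (Ici a))
    (hW : ∀ x ≥ a, 0 < pruferEnergy f a x) {N : ℝ} (hN : a ≤ N) :
    ∫ t in a..N, 2 * derivWithin f (Ici a) t *
        (f t + derivWithin (derivWithin f (Ici a)) (Ici a) t) / pruferEnergy f a t =
      log (pruferEnergy f a N) - log (pruferEnergy f a a) := by
  have hf' := hf.derivWithin (uniqueDiffOn_Ici a) (m := 1) (by norm_num)
  have hWc := continuousOn_pruferEnergy (hf.of_le (by norm_num))
  refine integral_eq_sub_of_hasDerivAt_of_le (f := fun t => log (pruferEnergy f a t)) hN ?_ ?_ ?_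
  · exact (hWc.log fun x hx => (hW x hx).ne').mono Icc_subset_Ici_self
  · exact fun x hx => (hasDerivAt_pruferEnergy hf hx.1).log (hW x hx.1.le).ne'
  · refine ContinuousOn.intervalIntegrable_of_Icc hN (ContinuousOn.mono ?_ Icc_subset_Ici_self)
    refine ContinuousOn.div ?_ hWc fun x hx => (hW x hx).ne'
    exact (continuousOn_const.mul hf'.continuousOn).mul
      (hf.continuousOn.add (hf'.continuousOn_derivWithin (uniqueDiffOn_Ici a) le_rfl))

lemma tendsto_sqrt_pruferEnergy (hf : ContDiffOn ℝ 2 f (Ici a))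
    (hW : ∀ x ≥ a, 0 < pruferEnergy f a x) {I : ℝ}
    (hI : Tendsto (fun N => ∫ t in a..N, 2 * derivWithin f (Ici a) t *
        (f t + derivWithin (derivWithin f (Ici a)) (Ici a) t) / pruferEnergy f a t)
      atTop (𝓝 I)) :
    Tendsto (fun x => √(pruferEnergy f a x)) atTop (𝓝 (√(pruferEnergy f a a) * exp (I / 2))) := by
  refine Tendsto.congr' ?_ ((hI.div_const 2).rexp.const_mul _)
  filter_upwards [eventually_ge_atTop a] with N hN
  have hWN : pruferEnergy f a N = pruferEnergy f a a * exp (log (pruferEnergy f a N) -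
      log (pruferEnergy f a a)) := by
    rw [exp_sub, exp_log (hW N hN), exp_log (hW a le_rfl)]
    field_simp [(hW a le_rfl).ne']
  rw [integral_logDeriv_pruferEnergy hf hW hN, exp_half, ← sqrt_mul (hW a le_rfl).le, ← hWN]

lemma abs_one_sub_pruferPhaseRate_le {x v : ℝ} (hW : 0 < pruferEnergy f a x)
    (hv : f x + derivWithin (derivWithin f (Ici a)) (Ici a) x = v * f x) :
    |1 - pruferPhaseRate f a x| ≤ |v| := by
  have hfW : f x ^ 2 ≤ pruferEnergy f a x := le_add_of_nonneg_right (sq_nonneg _)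
  have hrate : 1 - pruferPhaseRate f a x = v * (f x ^ 2 / pruferEnergy f a x) := by
    rw [pruferPhaseRate, ← mul_div_assoc, eq_div_iff hW.ne', sub_mul, div_mul_cancel₀ _ hW.ne']
    unfold pruferEnergy
    linear_combination f x * hv
  rw [hrate, abs_mul, abs_of_nonneg (div_nonneg (sq_nonneg _) hW.le)]
  exact mul_le_of_le_one_right (abs_nonneg v) (div_le_one_of_le₀ hfW hW.le)

lemma pruferEnergy_eq_sq_of_polar {x R θ : ℝ} (hx : a ≤ x) (hd : DifferentiableAt ℝ f x)
    (hs : f x = R * sin θ) (hc : deriv f x = R * cos θ) : pruferEnergy f a x = R ^ 2 := by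
  rw [pruferEnergy, hd.derivWithin (uniqueDiffOn_Ici a x hx), hs, hc]
  linear_combination R ^ 2 * sin_sq_add_cos_sq θ

lemma pruferEnergy_pos_of_polar {x R θ : ℝ} (hx : a ≤ x) (hR : 0 < R)
    (hs : f x = R * sin θ) (hc : deriv f x = R * cos θ) : 0 < pruferEnergy f a x := by
  by_cases hd : DifferentiableAt ℝ f x
  · rw [pruferEnergy_eq_sq_of_polar hx hd hs hc]
    positivity
  · rw [deriv_zero_of_not_differentiableAt hd, eq_comm, mul_eq_zero, or_iff_right hR.ne'] at hc
    have hfR : f x ^ 2 = R ^ 2 := by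
      rw [hs]
      linear_combination R ^ 2 * sin_sq_add_cos_sq θ - R ^ 2 * cos θ * hc
    rw [pruferEnergy, hfR]
    positivity

lemma abs_deriv_pruferPhase_sub_id_le (hf : ContDiffOn ℝ 2 f (Ici a))
    (hW : ∀ x ≥ a, 0 < pruferEnergy f a x) {v b : ℝ → ℝ}
    (hv : ∀ x > a, f x + derivWithin (derivWithin f (Ici a)) (Ici a) x = v x * f x)
    (hb : ContinuousOn b (Ici a)) (hvb : ∀ x > a, |v x| ≤ b x) :
    ∀ x ≥ a, |deriv (fun x => pruferPhase f a x - x) x| ≤ b x := by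
  intro x hx
  have hr : HasDerivAt (fun x => pruferPhase f a x - x) (pruferPhaseRate f a (max x a) - 1) x :=
    (hasDerivAt_pruferPhase hf hW x).sub (hasDerivAt_id' x)
  rw [hr.deriv, max_eq_left hx, abs_sub_comm]
  refine le_of_continuousOn_Ici_of_forall_Ioi (g := fun x => |1 - pruferPhaseRate f a x|)
    (continuousOn_const.sub (continuousOn_pruferPhaseRate hf hW)).abs hb
    (fun y hy => (abs_one_sub_pruferPhaseRate_le (hW y hy.le) (hv y hy)).trans (hvb y hy)) x hx

theorem exists_sin_asymptotics_of_tendsto_integral (hf : ContDiffOn ℝ 2 f (Ici a))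
    (hW : ∀ x ≥ a, 0 < pruferEnergy f a x) {v b : ℝ → ℝ}
    (hv : ∀ x > a, f x + derivWithin (derivWithin f (Ici a)) (Ici a) x = v x * f x)
    (hb : ContinuousOn b (Ici a)) (hvb : ∀ x > a, |v x| ≤ b x) {I : ℝ}
    (hI : Tendsto (fun N => ∫ t in a..N, 2 * derivWithin f (Ici a) t *
        (f t + derivWithin (derivWithin f (Ici a)) (Ici a) t) / pruferEnergy f a t)
      atTop (𝓝 I)) :
    ∃ A : ℝ, A ≠ 0 ∧ ∃ r ε : ℝ → ℝ,
      (∀ x ≥ a, |deriv r x| ≤ b x) ∧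
      Tendsto ε atTop (𝓝 0) ∧
      (∀ x ≥ a, f x = A * sin (x + r x) * (1 + ε x)) ∧
      ∃ M : ℝ, ∀ x ≥ a, |f x| ≤ M := by
  have hlim := tendsto_sqrt_pruferEnergy hf hW hI
  set A := √(pruferEnergy f a a) * exp (I / 2)
  have hA : 0 < A := mul_pos (sqrt_pos.2 (hW a le_rfl)) (exp_pos _)
  refine ⟨A, hA.ne', fun x => pruferPhase f a x - x, fun x => √(pruferEnergy f a x) / A - 1,
    abs_deriv_pruferPhase_sub_id_le hf hW hv hb hvb, ?_, fun x hx => ?_, ?_⟩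
  · simpa [div_self hA.ne'] using (hlim.div_const A).sub_const 1
  · rw [eq_sqrt_pruferEnergy_mul_sin_pruferPhase hf hW x hx, add_sub_cancel, add_sub_cancel]
    field_simp
  · obtain ⟨M, hM⟩ := exists_abs_le_of_continuousOn_Ici_of_tendsto
      (continuousOn_pruferEnergy (hf.of_le (by norm_num))).sqrt hlim
    refine ⟨M, fun x hx => ?_⟩
    rw [eq_sqrt_pruferEnergy_mul_sin_pruferPhase hf hW x hx, abs_mul]
    exact (mul_le_of_le_one_right (abs_nonneg _) (abs_sin_le_one _)).trans (hM x hx)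

end Prufer

theorem stmt17_general (C : ℝ) (V : ℝ → ℝ → ℝ) :
    ∀ᵐ lam : ℝ, ∀ ω R θ : ℝ → ℝ,
      ContDiffOn ℝ 2 ω (Ici 1) →
      (∀ ξ ≥ (1:ℝ), -(deriv (deriv ω) ξ) + V ξ lam * ω ξ = ω ξ) →
      (∀ ξ ≥ (1:ℝ), 0 < R ξ) →
      (∀ ξ ≥ (1:ℝ), ω ξ = R ξ * Real.sin (θ ξ)) →
      (∀ ξ ≥ (1:ℝ), deriv ω ξ = R ξ * Real.cos (θ ξ)) →
      (∀ ξ ≥ (1:ℝ), |V ξ lam| ≤ C * (1 + ξ) ^ (-(2:ℝ)/3)) →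
      (∃ I : ℝ, Tendsto (fun N : ℝ =>
        ∫ ξ in (1:ℝ)..N, V ξ lam * Real.sin (2 * θ ξ)) atTop (𝓝 I)) →
      ∃ A : ℝ, A ≠ 0 ∧ ∃ r ε : ℝ → ℝ,
        (∀ ξ ≥ (1:ℝ), |deriv r ξ| ≤ C * (1 + ξ) ^ (-(2:ℝ)/3)) ∧
        Tendsto ε atTop (𝓝 0) ∧
        (∀ ξ ≥ (1:ℝ), ω ξ = A * Real.sin (ξ + r ξ) * (1 + ε ξ)) ∧
        ∃ M : ℝ, ∀ ξ ≥ (1:ℝ), |ω ξ| ≤ M := by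
  refine ae_of_all _ fun lam ω R θ hω hODE hR hsin hcos hVb ⟨I, hI⟩ => ?_
  have hW : ∀ ξ ≥ (1:ℝ), 0 < pruferEnergy ω 1 ξ := fun ξ hξ =>
    pruferEnergy_pos_of_polar hξ (hR ξ hξ) (hsin ξ hξ) (hcos ξ hξ)
  have hpotential : ∀ ξ > (1:ℝ),
      ω ξ + derivWithin (derivWithin ω (Ici 1)) (Ici 1) ξ = V ξ lam * ω ξ := fun ξ hξ => by
    rw [derivWithin_derivWithin_Ici_eq_deriv_deriv hξ]
    linarith [hODE ξ hξ.le]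
  have hintegrand : ∀ ξ > (1:ℝ), V ξ lam * sin (2 * θ ξ) = 2 * derivWithin ω (Ici 1) ξ *
      (ω ξ + derivWithin (derivWithin ω (Ici 1)) (Ici 1) ξ) / pruferEnergy ω 1 ξ := by
    intro ξ hξ
    have hd : DifferentiableAt ℝ ω ξ :=
      (hasDerivAt_derivWithin_of_contDiffOn_Ici hω (by norm_num) hξ).differentiableAt
    rw [hpotential ξ hξ, pruferEnergy_eq_sq_of_polar hξ.le hd (hsin ξ hξ.le) (hcos ξ hξ.le),
      hd.derivWithin (uniqueDiffOn_Ici 1 ξ hξ.le), hcos ξ hξ.le, hsin ξ hξ.le, sin_two_mul]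
    field_simp [(hR ξ hξ.le).ne']
  refine exists_sin_asymptotics_of_tendsto_integral hω hW hpotential ?_
    (fun ξ hξ => hVb ξ hξ.le) (hI.congr' ?_)
  · exact continuousOn_const.mul (ContinuousOn.rpow_const (by fun_prop)
      fun x hx => Or.inl (by linarith [mem_Ici.1 hx]))
  · filter_upwards [eventually_ge_atTop 1] with N hN
    refine integral_congr_ae (ae_of_all _ fun ξ hξ => hintegrand ξ ?_)
    rw [uIoc_of_le hN] at hξ
    exact hξ.1

theorem stmt17 (q : ℝ → ℝ) (hq : Continuous q) (C : ℝ) (hC : 0 < C)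
    (c : ℝ) (hc : c = (3/2 : ℝ) ^ ((2:ℝ)/3))
    (V : ℝ → ℝ → ℝ)
    (hV : ∀ ξ lam : ℝ, V ξ lam =
      5 / (36 * ξ^2) + (-lam + q (c * ξ ^ ((2:ℝ)/3))) / (c * ξ ^ ((2:ℝ)/3))) :
    ∀ᵐ lam : ℝ, ∀ ω R θ : ℝ → ℝ,
      ContDiffOn ℝ 2 ω (Ici 1) →
      (∀ ξ ≥ (1:ℝ), -(deriv (deriv ω) ξ) + V ξ lam * ω ξ = ω ξ) →
      (∀ ξ ≥ (1:ℝ), 0 < R ξ) →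
      (∀ ξ ≥ (1:ℝ), ω ξ = R ξ * Real.sin (θ ξ)) →
      (∀ ξ ≥ (1:ℝ), deriv ω ξ = R ξ * Real.cos (θ ξ)) →
      (∀ ξ ≥ (1:ℝ), |V ξ lam| ≤ C * (1 + ξ) ^ (-(2:ℝ)/3)) →
      (∃ I : ℝ, Tendsto (fun N : ℝ =>
        ∫ ξ in (1:ℝ)..N, V ξ lam * Real.sin (2 * θ ξ)) atTop (𝓝 I)) →
      ∃ A : ℝ, A ≠ 0 ∧ ∃ r ε : ℝ → ℝ,
        (∀ ξ ≥ (1:ℝ), |deriv r ξ| ≤ C * (1 + ξ) ^ (-(2:ℝ)/3)) ∧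
        Tendsto ε atTop (𝓝 0) ∧
        (∀ ξ ≥ (1:ℝ), ω ξ = A * Real.sin (ξ + r ξ) * (1 + ε ξ)) ∧
        ∃ M : ℝ, ∀ ξ ≥ (1:ℝ), |ω ξ| ≤ M :=
  stmt17_general C V
end
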